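/- Single-layer SLM fixed point: specializing the GLM fixed-point equations to the AWGN likelihood P(y|v) = N(y|v, σ_w²), the three coupled equations for (d, q, d̃) reduce to the single scalar fixed-point equation η = σ_w² + (1/α)·ε(η), where η = 1/(2d̃) and ε(η) = E[(X − E[X|X+√η·Z])²] is the MMSE of estimating X ~ p_X from X + √η·Z with Z standard normal independent of X. -/

import Mathlib

open MeasureTheory

/-- One-dimensional Gaussian density with mean `m` and variance `v`. -/
noncomputable def gaussPdf (y m v : ℝ) : ℝ :=
  (Real.sqrt (2*Real.pi*v))⁻¹ * Real.exp (-(y-m)^2/(2*v))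

/-- Standard normal density (the Gaussian measure `Dξ`). -/
noncomputable def stdNormPdf (z : ℝ) : ℝ :=
  (Real.sqrt (2*Real.pi))⁻¹ * Real.exp (-z^2/2)

/-- The quantity `d(η) = E[⟨X⟩²]` for the scalar AWGN channel with noise variance `η`. -/
noncomputable def dFun (pX : ℝ → ℝ) (η : ℝ) : ℝ :=
  ∫ ζ : ℝ, (∫ x : ℝ, x * pX x * gaussPdf x ζ η)^2 / (∫ x : ℝ, pX x * gaussPdf x ζ η)

/-- The MMSE `ε(η)` of estimating `X ~ p_X` from `X + √η·Z`, `Z` standard normal: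
`ε(η) = E[X²] - E[⟨X⟩²]`. -/
noncomputable def mmseFun (pX : ℝ → ℝ) (η : ℝ) : ℝ :=
  (∫ x : ℝ, x^2 * pX x) - dFun pX η

/-!
Since `d̃ > 0` forces `σ_X² > d`, all Gaussians below are nondegenerate. With the AWGN likelihood every integral in the equation for `q` is Gaussian. Completing the
square twice (first in `z`, then in `ξ`) gives the closed form `q = d/α + v²/(σ_w² + v)` with
`v = (σ_X² − d)/α`, hence `d̃ = 1/(2(σ_w² + v))`, i.e. `η = σ_w² + v`, and `α v = σ_X² − d` is
the MMSE `ε(η)`.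
-/

open Real ProbabilityTheory NNReal

lemma integral_sq_gaussianReal (μ : ℝ) (v : ℝ≥0) : ∫ x, x ^ 2 ∂gaussianReal μ v = v + μ ^ 2 := by
  have h := variance_eq_sub (memLp_id_gaussianReal (μ := μ) (v := v) 2)
  simp only [variance_id_gaussianReal, integral_id_gaussianReal, Pi.pow_apply, id] at h
  linarith

lemma gaussPdf_eq_gaussianPDFReal (y m : ℝ) (v : ℝ≥0) : gaussPdf y m v = gaussianPDFReal m v y := rfl

lemma integral_quadratic_mul_gaussPdf {v : ℝ} (hv : 0 < v) (m A B C : ℝ) :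
    ∫ z, (A + B * z + C * z ^ 2) * gaussPdf z m v = A + B * m + C * (v + m ^ 2) := by
  lift v to ℝ≥0 using hv.le
  have h1 : Integrable (fun x : ℝ => x) (gaussianReal m v) :=
    (memLp_id_gaussianReal 1).integrable le_rfl
  have h2 : Integrable (fun x : ℝ => x ^ 2) (gaussianReal m v) :=
    (memLp_id_gaussianReal 2).integrable_sq
  have h01 : Integrable (fun x : ℝ => A + B * x) (gaussianReal m v) :=
    (integrable_const A).add (h1.const_mul B)
  calc ∫ z, (A + B * z + C * z ^ 2) * gaussPdf z m v
      = ∫ z, (A + B * z + C * z ^ 2) ∂gaussianReal m v := by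
        rw [integral_gaussianReal_eq_integral_smul (by exact_mod_cast hv.ne')]
        simp_rw [smul_eq_mul, mul_comm (gaussianPDFReal _ _ _), gaussPdf_eq_gaussianPDFReal]
    _ = A + B * m + C * (v + m ^ 2) := by
        rw [integral_add h01 (h2.const_mul C), integral_add (integrable_const A) (h1.const_mul B),
          integral_const_mul, integral_const_mul, integral_id_gaussianReal,
          integral_sq_gaussianReal]
        simp

lemma integral_gaussPdf {v : ℝ} (hv : 0 < v) (m : ℝ) : ∫ z, gaussPdf z m v = 1 := by
  simpa using integral_quadratic_mul_gaussPdf hv m 1 0 0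

lemma integral_mul_gaussPdf {v : ℝ} (hv : 0 < v) (m : ℝ) : ∫ z, z * gaussPdf z m v = m := by
  simpa using integral_quadratic_mul_gaussPdf hv m 0 1 0

lemma gaussPdf_nonneg (y m v : ℝ) : 0 ≤ gaussPdf y m v := by
  unfold gaussPdf
  positivity

lemma gaussPdf_pos (y m : ℝ) {v : ℝ} (hv : 0 < v) : 0 < gaussPdf y m v := by
  lift v to ℝ≥0 using hv.le
  exact gaussianPDFReal_pos m v y (by exact_mod_cast hv.ne')

lemma gaussPdf_of_nonpos (y m : ℝ) {v : ℝ} (hv : v ≤ 0) : gaussPdf y m v = 0 := by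
  have : 2 * π * v ≤ 0 := mul_nonpos_of_nonneg_of_nonpos (by positivity) hv
  simp [gaussPdf, sqrt_eq_zero_of_nonpos this]

lemma stdNormPdf_eq_gaussPdf (ξ : ℝ) : stdNormPdf ξ = gaussPdf ξ 0 1 := by
  simp [stdNormPdf, gaussPdf]

/-- Bayes' rule for the linear Gaussian model `z ~ N(m, v)`, `y | z ~ N(a z, w)`. -/
lemma gaussPdf_mul_gaussPdf {w v : ℝ} (hw : 0 < w) (hv : 0 < v) (a y z m : ℝ) :
    gaussPdf y (a * z) w * gaussPdf z m v
      = gaussPdf y (a * m) (w + a ^ 2 * v)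
        * gaussPdf z ((w * m + a * v * y) / (w + a ^ 2 * v)) (w * v / (w + a ^ 2 * v)) := by
  have hS : 0 < w + a ^ 2 * v := by positivity
  unfold gaussPdf
  rw [mul_mul_mul_comm, ← exp_add, mul_mul_mul_comm, ← exp_add, ← mul_inv, ← mul_inv,
    ← sqrt_mul (by positivity), ← sqrt_mul (by positivity)]
  congr 1
  · congr 2
    field_simp
  · congr 1
    field_simp
    ring

section AWGNChannel

variable {w v : ℝ}

lemma sq_integral_div_integral_gaussPdf_mul_gaussPdf (hw : 0 < w) (hv : 0 < v) (y m : ℝ) :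
    (∫ z, z * gaussPdf y z w * gaussPdf z m v) ^ 2 / (∫ z, gaussPdf y z w * gaussPdf z m v)
      = ((v * y + w * m) / (w + v)) ^ 2 * gaussPdf y m (w + v) := by
  have hpost : 0 < w * v / (w + v) := by positivity
  have hprod : ∀ z, gaussPdf y z w * gaussPdf z m v
      = gaussPdf y m (w + v) * gaussPdf z ((v * y + w * m) / (w + v)) (w * v / (w + v)) := by
    intro z
    simpa [add_comm (w * m)] using gaussPdf_mul_gaussPdf hw hv 1 y z m
  have hden : ∫ z, gaussPdf y z w * gaussPdf z m v = gaussPdf y m (w + v) := by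
    simp_rw [hprod, integral_const_mul, integral_gaussPdf hpost, mul_one]
  have hnum : ∫ z, z * gaussPdf y z w * gaussPdf z m v
      = gaussPdf y m (w + v) * ((v * y + w * m) / (w + v)) := by
    simp_rw [mul_assoc, hprod, mul_left_comm _ (gaussPdf y m (w + v)), integral_const_mul,
      integral_mul_gaussPdf hpost]
  rw [hden, hnum]
  have := (gaussPdf_pos y m (add_pos hw hv)).ne'
  field_simp

lemma integral_sq_affine_mul_gaussPdf_mul_stdNormPdf {s : ℝ} (hs : 0 < s) (c y P Q : ℝ) :
    ∫ ξ, (P + Q * ξ) ^ 2 * gaussPdf y (c * ξ) s * stdNormPdf ξ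
      = (P ^ 2 + 2 * P * Q * (c * y / (s + c ^ 2))
          + Q ^ 2 * (s / (s + c ^ 2) + (c * y / (s + c ^ 2)) ^ 2)) * gaussPdf y 0 (s + c ^ 2) := by
  have hpost : 0 < s / (s + c ^ 2) := by positivity
  have hprod : ∀ ξ, gaussPdf y (c * ξ) s * stdNormPdf ξ
      = gaussPdf y 0 (s + c ^ 2) * gaussPdf ξ (c * y / (s + c ^ 2)) (s / (s + c ^ 2)) := by
    intro ξ
    simpa [stdNormPdf_eq_gaussPdf] using gaussPdf_mul_gaussPdf hs one_pos c y ξ 0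
  have hexpand : ∀ ξ, (P + Q * ξ) ^ 2 * gaussPdf y (c * ξ) s * stdNormPdf ξ
      = gaussPdf y 0 (s + c ^ 2) * ((P ^ 2 + 2 * P * Q * ξ + Q ^ 2 * ξ ^ 2)
          * gaussPdf ξ (c * y / (s + c ^ 2)) (s / (s + c ^ 2))) := by
    intro ξ
    rw [mul_assoc, hprod]
    ring
  simp_rw [hexpand, integral_const_mul, integral_quadratic_mul_gaussPdf hpost]
  ring

/-- The value is `E[z²] = c² + v` minus the posterior variance `w v / (w + v)` of `z`. -/
lemma integral_overlap_awgn (hw : 0 < w) (hv : 0 < v) (c : ℝ) :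
    ∫ y, ∫ ξ, ((∫ z, z * gaussPdf y z w * gaussPdf z (c * ξ) v) ^ 2
        / (∫ z, gaussPdf y z w * gaussPdf z (c * ξ) v)) * stdNormPdf ξ
      = c ^ 2 + v ^ 2 / (w + v) := by
  have hs : 0 < w + v := add_pos hw hv
  have hS : 0 < w + v + c ^ 2 := by positivity
  have hinner : ∀ y, ∫ ξ, ((∫ z, z * gaussPdf y z w * gaussPdf z (c * ξ) v) ^ 2
        / (∫ z, gaussPdf y z w * gaussPdf z (c * ξ) v)) * stdNormPdf ξ
      = (w ^ 2 * c ^ 2 / ((w + v) * (w + v + c ^ 2)) + 0 * y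
          + ((v + c ^ 2) / (w + v + c ^ 2)) ^ 2 * y ^ 2) * gaussPdf y 0 (w + v + c ^ 2) := by
    intro y
    have hmean : ∀ ξ, (v * y + w * (c * ξ)) / (w + v) = v * y / (w + v) + w * c / (w + v) * ξ := by
      intro ξ
      ring
    simp_rw [sq_integral_div_integral_gaussPdf_mul_gaussPdf hw hv, hmean,
      integral_sq_affine_mul_gaussPdf_mul_stdNormPdf hs]
    congr 1
    field_simp
    ring
  simp_rw [hinner, integral_quadratic_mul_gaussPdf hS]
  field_simp
  ring

end AWGNChannel

lemma dFun_nonneg {pX : ℝ → ℝ} (hnn : ∀ x, 0 ≤ pX x) (η : ℝ) : 0 ≤ dFun pX η :=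
  integral_nonneg fun _ ↦
    div_nonneg (sq_nonneg _) (integral_nonneg fun x ↦ mul_nonneg (hnn x) (gaussPdf_nonneg _ _ _))

theorem stmt15_general (pX : ℝ → ℝ) (hnn : ∀ x, 0 ≤ pX x)
    (σX2 : ℝ) (hσ : σX2 = ∫ x : ℝ, x^2 * pX x)
    (α : ℝ) (hα : 0 < α) (σw2 : ℝ) (hσw : 0 < σw2)
    (d q dt η : ℝ) (hdt : 0 < dt) (hη : η = 1/(2*dt))
    (hd : d = dFun pX η)
    (hq : q = ∫ y : ℝ, ∫ ξ : ℝ,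
        ((∫ z : ℝ, z * gaussPdf y z σw2 *
            gaussPdf z (Real.sqrt (d/α) * ξ) ((σX2 - d)/α))^2
          / (∫ z : ℝ, gaussPdf y z σw2 *
            gaussPdf z (Real.sqrt (d/α) * ξ) ((σX2 - d)/α))) * stdNormPdf ξ)
    (hdteq : dt = α*(α*q - d)/(2*(σX2 - d)^2)) :
    η = σw2 + (1/α) * mmseFun pX η := by
  have hd0 : 0 ≤ d := hd ▸ dFun_nonneg hnn η
  have hgap : 0 < σX2 - d := by
    by_contra! hle
    have hvanish : ∀ a b, gaussPdf a b ((σX2 - d) / α) = 0 := fun a b ↦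
      gaussPdf_of_nonpos a b (div_nonpos_of_nonpos_of_nonneg hle hα.le)
    have hq0 : q = 0 := by simp [hq, hvanish]
    have : dt ≤ 0 := by
      rw [hdteq, hq0]
      exact div_nonpos_of_nonpos_of_nonneg (by nlinarith) (by positivity)
    linarith
  have hv : 0 < (σX2 - d) / α := div_pos hgap hα
  have hqval : q = d / α + ((σX2 - d) / α) ^ 2 / (σw2 + (σX2 - d) / α) := by
    rw [hq, integral_overlap_awgn hσw hv, sq_sqrt (div_nonneg hd0 hα.le)]
  have hdtval : dt = 1 / (2 * (σw2 + (σX2 - d) / α)) := by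
    rw [hdteq, hqval]
    field_simp
    ring
  rw [mmseFun, ← hσ, ← hd, hη, hdtval]
  field_simp

/-- Single-layer SLM fixed point: with the AWGN likelihood `P(y|v) = N(y|v,σ_w²)`,
the GLM fixed-point equations for `(d, q, d̃)` reduce to
`η = σ_w² + (1/α)·ε(η)` with `η = 1/(2d̃)`. -/
theorem stmt15 (pX : ℝ → ℝ) (hmeas : Measurable pX) (hnn : ∀ x, 0 ≤ pX x)
    (hnorm : ∫ x, pX x = 1)
    (σX2 : ℝ) (hσ : σX2 = ∫ x : ℝ, x^2 * pX x)
    (α : ℝ) (hα : 0 < α) (σw2 : ℝ) (hσw : 0 < σw2)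
    (d q dt η : ℝ) (hdt : 0 < dt) (hη : η = 1/(2*dt))
    (hd : d = dFun pX η)
    (hq : q = ∫ y : ℝ, ∫ ξ : ℝ,
        ((∫ z : ℝ, z * gaussPdf y z σw2 *
            gaussPdf z (Real.sqrt (d/α) * ξ) ((σX2 - d)/α))^2
          / (∫ z : ℝ, gaussPdf y z σw2 *
            gaussPdf z (Real.sqrt (d/α) * ξ) ((σX2 - d)/α))) * stdNormPdf ξ)
    (hdteq : dt = α*(α*q - d)/(2*(σX2 - d)^2)) :
    η = σw2 + (1/α) * mmseFun pX η :=
  stmt15_general pX hnn σX2 hσ α hα σw2 hσw d q dt η hdt hη hd hq hdteq
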